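/- arXiv:2508.18216 — 4 statements merged into one kernel-verified Lean document; each statement's English description precedes it below -/
import Mathlib

section
/- Suppose (m_n) is a strictly increasing sequence of positive integers and (q_k) is a sequence of reals ≥ 1 satisfying q_{m_n + 1} > q_{m_n}^{1+ε} for all n (for some fixed ε > 0) and q_{k+1} ≥ q_k for all k. If q_{m_N} ≥ N^{N log N} for some large N, then q_{m_n} ≥ n^{n log n} for all n ≥ N. -/
/-! Since `n ^ (n log n) = exp (n (log n)^2)` and
`(n + 1) (log (n + 1))^2 ≤ (1 + ε) n (log n)^2` once `ε n` is large, the bound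
`n ^ (n log n) ≤ q_{m_n}` propagates from `n` to `n + 1` through
`q_{m_{n+1}} ≥ q_{m_n + 1} > q_{m_n} ^ (1 + ε)`. -/

open Real

lemma log_add_one_le_log_add_inv {x : ℝ} (hx : 0 < x) : log (x + 1) ≤ log x + x⁻¹ := by
  have h := log_le_sub_one_of_pos (show 0 < (x + 1) / x by positivity)
  rw [log_div (by positivity) hx.ne', add_div, div_self hx.ne', one_div] at h
  linarith

lemma add_one_mul_log_add_one_sq_le {ε x : ℝ} (hx : 3 ≤ x) (hεx : 7 ≤ ε * x) :
    (x + 1) * log (x + 1) ^ 2 ≤ (1 + ε) * x * log x ^ 2 := by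
  have hx0 : 0 < x := by linarith
  have hL : 1 ≤ log x := by
    rw [le_log_iff_exp_le hx0]
    linarith [exp_one_lt_d9]
  have hinv : x⁻¹ ≤ 1 := inv_le_one_of_one_le₀ (by linarith)
  have hxinv : x * x⁻¹ = 1 := mul_inv_cancel₀ hx0.ne'
  have hsq : log (x + 1) ^ 2 ≤ (log x + x⁻¹) ^ 2 :=
    pow_le_pow_left₀ (log_nonneg (by linarith)) (log_add_one_le_log_add_inv hx0) 2
  -- `(x + 1) (L + 1/x)^2 ≤ x L^2 + 7 L^2` for `L ≥ 1`, `x ≥ 3`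
  nlinarith [mul_le_mul_of_nonneg_right hεx (sq_nonneg (log x)), inv_pos.2 hx0]

lemma add_one_rpow_le_rpow_rpow {ε x : ℝ} (hx : 3 ≤ x) (hεx : 7 ≤ ε * x) :
    (x + 1) ^ ((x + 1) * log (x + 1)) ≤ (x ^ (x * log x)) ^ (1 + ε) := by
  rw [← rpow_mul (by linarith), rpow_def_of_pos (by linarith), rpow_def_of_pos (by linarith),
    exp_le_exp]
  nlinarith [add_one_mul_log_add_one_sq_le hx hεx]

lemma le_of_rpow_le_succ {a b : ℕ → ℝ} {p : ℝ} (hp : 0 ≤ p) {N : ℕ} (hb₀ : ∀ n, 0 ≤ b n)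
    (hb : ∀ n, N ≤ n → b (n + 1) ≤ b n ^ p) (ha : ∀ n, a n ^ p ≤ a (n + 1)) (hN : b N ≤ a N) :
    ∀ n, N ≤ n → b n ≤ a n := by
  intro n hn
  induction n, hn using Nat.le_induction with
  | base => exact hN
  | succ n hn ih => exact (hb n hn).trans ((rpow_le_rpow (hb₀ n) ih hp).trans (ha n))

/-- If `q_{m_n+1} > q_{m_n}^{1+ε}` for all `n`, `(q_k)` is nondecreasing and `(m_n)`
strictly increasing, then `q_{m_N} ≥ N^{N log N}` for some large `N` implies
`q_{m_n} ≥ n^{n log n}` for all `n ≥ N`. -/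
theorem denominator_superexp_growth (ε : ℝ) (hε : 0 < ε) :
    ∃ N₀ : ℕ, ∀ (m : ℕ → ℕ) (q : ℕ → ℝ), StrictMono m → (∀ k, 1 ≤ q k) →
      (∀ k, q k ≤ q (k + 1)) →
      (∀ n, q (m n) ^ (1 + ε) < q (m n + 1)) →
      ∀ N : ℕ, N₀ ≤ N → ((N : ℝ) ^ ((N : ℝ) * Real.log N) ≤ q (m N)) →
      ∀ n : ℕ, N ≤ n → (n : ℝ) ^ ((n : ℝ) * Real.log n) ≤ q (m n) := by
  refine ⟨max 3 ⌈7 / ε⌉₊, fun m q hm _ hqstep hpow N hN hbase => ?_⟩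
  have hq : Monotone q := monotone_nat_of_le_succ hqstep
  refine le_of_rpow_le_succ (by linarith) (fun n => by positivity) (fun n hn => ?_)
    (fun n => (hpow n).le.trans (hq (hm n.lt_succ_self))) hbase
  have hn₀ : max 3 ⌈7 / ε⌉₊ ≤ n := hN.trans hn
  have h3 : (3 : ℝ) ≤ n := by exact_mod_cast (le_max_left _ _).trans hn₀
  have h7 : 7 ≤ ε * n := by
    have : 7 / ε ≤ n := (Nat.le_ceil _).trans (by exact_mod_cast (le_max_right _ _).trans hn₀)
    rwa [div_le_iff₀ hε, mul_comm] at this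
  push_cast
  exact add_one_rpow_le_rpow_rpow h3 h7
end

section
/- Let α be irrational. For any interval I ⊂ 𝕋 and any x ∈ 𝕋, |#{0 ≤ s < q_n : x + sα mod 1 ∈ I} − q_n λ(I)| ≤ 4, where λ is Lebesgue measure on 𝕋 and q_n is a continued fraction denominator of α. -/
/-! Put `y = x - a` and `L = b - a`. Since `|q α - p| < 1 / q`, for `s < q` the point `y + s α`
lies within `1 / q` of `y + s p / q`. As `p` is coprime to `q`, the latter are, modulo `1`, the `q`
grid points `(k + δ) / q`, `k < q`, with `δ = fract (q y)`, each taken once. About `q L` grid points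
lie in `[0, L)`, and moving each by less than one grid step changes that count by at most two. -/

attribute [local instance] Classical.propDecidable

open Finset

theorem Finset.card_filter_comp_of_injOn {α : Type*} {s : Finset α} {J : α → α}
    (hmaps : Set.MapsTo J s s) (hinj : Set.InjOn J s) (T : α → Prop) [DecidablePred T] :
    #{x ∈ s | T (J x)} = #{x ∈ s | T x} := by
  have hbij : Set.BijOn J s s := (s.finite_toSet.injOn_iff_bijOn_of_mapsTo hmaps).mp hinj
  refine card_nbij J (fun x hx => ?_) (hinj.mono fun x hx => (mem_filter.mp hx).1)
    (fun y hy => ?_)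
  · simp only [coe_filter, Set.mem_ofPred_eq] at hx ⊢
    exact ⟨hmaps hx.1, hx.2⟩
  · simp only [coe_filter, Set.mem_ofPred_eq] at hy
    obtain ⟨x, hx, rfl⟩ := hbij.surjOn hy.1
    exact ⟨x, by simpa using ⟨hx, hy.2⟩, rfl⟩

section Fract

variable {R : Type*} [Ring R] [LinearOrder R] [IsStrictOrderedRing R] [FloorRing R] {t : R}

theorem Int.self_le_fract_of_lt_one (ht : t < 1) : t ≤ Int.fract t := by
  have : (⌊t⌋ : R) ≤ 0 := by
    exact_mod_cast Int.lt_add_one_iff.mp (Int.floor_lt.mpr (by simpa using ht))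
  exact (le_sub_self_iff t).mpr this

theorem Int.fract_le_self_of_nonneg (ht : 0 ≤ t) : Int.fract t ≤ t := by
  have : (0 : R) ≤ ⌊t⌋ := by exact_mod_cast Int.floor_nonneg.mpr ht
  exact sub_le_self t this

end Fract

theorem card_range_filter_lt_or_eq_lt {q : ℕ} {c : ℝ} (hc : 0 ≤ c) (k : ℕ) :
    (#{j ∈ range q | ((j : ℕ) : ℝ) < c ∨ j = k} : ℝ) < c + 2 := by
  have hsub : {j ∈ range q | ((j : ℕ) : ℝ) < c ∨ j = k} ⊆ range ⌈c⌉₊ ∪ {k} := by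
    intro j hj
    rcases (mem_filter.mp hj).2 with hjc | rfl
    · exact mem_union_left _ (mem_range.mpr (Nat.lt_ceil.mpr hjc))
    · exact mem_union_right _ (mem_singleton_self j)
  have hcard : #{j ∈ range q | ((j : ℕ) : ℝ) < c ∨ j = k} ≤ ⌈c⌉₊ + 1 :=
    (card_le_card hsub).trans ((card_union_le _ _).trans (by simp))
  have hceil : (⌈c⌉₊ : ℝ) < c + 1 := Nat.ceil_lt_add_one hc
  have : (#{j ∈ range q | ((j : ℕ) : ℝ) < c ∨ j = k} : ℝ) ≤ ⌈c⌉₊ + 1 := by exact_mod_cast hcard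
  linarith

theorem card_range_filter_one_le_le_gt {q : ℕ} {c : ℝ} (hc : c < q) :
    c - 1 < #{j ∈ range q | 1 ≤ j ∧ ((j : ℕ) : ℝ) ≤ c} := by
  have hsub : Icc 1 ⌊c⌋₊ ⊆ {j ∈ range q | 1 ≤ j ∧ ((j : ℕ) : ℝ) ≤ c} := by
    intro j hj
    obtain ⟨hj1, hjc⟩ := mem_Icc.mp hj
    have hjc : ((j : ℕ) : ℝ) ≤ c := (Nat.le_floor_iff' (by omega)).mp hjc
    exact mem_filter.mpr ⟨mem_range.mpr (by exact_mod_cast hjc.trans_lt hc), hj1, hjc⟩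
  have hcard : ⌊c⌋₊ ≤ #{j ∈ range q | 1 ≤ j ∧ ((j : ℕ) : ℝ) ≤ c} := by
    simpa using card_le_card hsub
  have hfloor : c < ⌊c⌋₊ + 1 := Nat.lt_floor_add_one c
  have : (⌊c⌋₊ : ℝ) ≤ #{j ∈ range q | 1 ≤ j ∧ ((j : ℕ) : ℝ) ≤ c} := by exact_mod_cast hcard
  linarith

def affineResidue (q : ℕ) (m p : ℤ) (s : ℕ) : ℕ := ((m + s * p) % q).toNat

section AffineResidue

variable {q : ℕ} {m p : ℤ}

theorem cast_affineResidue (hq : q ≠ 0) (s : ℕ) :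
    (affineResidue q m p s : ℤ) = (m + s * p) % q :=
  Int.toNat_of_nonneg (Int.emod_nonneg _ (by exact_mod_cast hq))

theorem affineResidue_mapsTo (hq : q ≠ 0) :
    Set.MapsTo (affineResidue q m p) (range q) (range q) := by
  intro s _
  have := Int.emod_lt_of_pos (m + s * p) (by omega : (0 : ℤ) < q)
  rw [coe_range, Set.mem_Iio, ← Int.ofNat_lt, cast_affineResidue hq]
  exact this

theorem affineResidue_injOn (hq : q ≠ 0) (hcop : Nat.Coprime p.natAbs q) :
    Set.InjOn (affineResidue q m p) (range q) := by
  intro s hs t ht hst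
  have hmod : m + s * p ≡ m + t * p [ZMOD q] := by
    rw [Int.ModEq, ← cast_affineResidue hq, ← cast_affineResidue hq, hst]
  have hgcd : Int.gcd q p = 1 := by simpa [Int.gcd] using hcop.symm
  have : (s : ℤ) ≡ t [ZMOD q] := by
    simpa [hgcd] using (Int.ModEq.add_left_cancel' m hmod).cancel_right_div_gcd
      (by omega : (0 : ℤ) < q)
  exact (Int.natCast_modEq_iff.mp this).eq_of_lt_of_lt (by simpa using hs) (by simpa using ht)

end AffineResidue

theorem fract_add_nat_mul_eq_fract_affineResidue {q : ℕ} (hq : q ≠ 0) (p : ℤ) (y α : ℝ)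
    (s : ℕ) :
    Int.fract (y + s * α) = Int.fract
      ((affineResidue q ⌊q * y⌋ p s + Int.fract (q * y)) / q + s * (α - p / q)) := by
  set m := ⌊(q : ℝ) * y⌋
  have hqR : (q : ℝ) ≠ 0 := by exact_mod_cast hq
  have hdiv : (q : ℝ) * ((m + s * p) / q : ℤ) + affineResidue q m p s = m + s * p := by
    have := Int.mul_ediv_add_emod (m + s * p) q
    rw [← cast_affineResidue hq] at this
    exact_mod_cast this
  have hfloor : (m : ℝ) + Int.fract (q * y) = q * y := Int.floor_add_fract _
  have key : y + s * α = ((m + s * p) / q : ℤ) +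
      ((affineResidue q m p s + Int.fract (q * y)) / q + s * (α - p / q)) := by
    generalize Int.fract ((q : ℝ) * y) = F at hfloor ⊢
    field_simp
    linear_combination -hfloor - hdiv
  rw [key, Int.fract_intCast_add]

theorem abs_nat_mul_sub_div_lt {q s : ℕ} {α : ℝ} {p : ℤ} (hs : s < q)
    (happrox : |q * α - p| < 1 / q) : |s * (α - p / q)| < 1 / q := by
  have hq : (0 : ℝ) < q := by exact_mod_cast (Nat.zero_le s).trans_lt hs
  have hsq : (s : ℝ) / q ≤ 1 := (div_le_one hq).mpr (by exact_mod_cast hs.le)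
  calc |s * (α - p / q)| = s / q * |q * α - p| := by
        rw [← abs_of_nonneg (by positivity : (0 : ℝ) ≤ s / q), ← abs_mul]
        congr 1
        field_simp
    _ ≤ |q * α - p| := mul_le_of_le_one_left (abs_nonneg _) hsq
    _ < 1 / q := happrox

section Grid

variable {q j : ℕ} {δ ε L : ℝ}

theorem lt_mul_add_one_of_fract_grid_lt (hj : j + 2 ≤ q) (hδ0 : 0 ≤ δ) (hδ1 : δ < 1)
    (hε : |ε| < 1 / q) (h : Int.fract ((j + δ) / q + ε) < L) : (j : ℝ) < q * L + 1 := by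
  have hq : (0 : ℝ) < q := by exact_mod_cast (by omega : 0 < q)
  have hqε : |q * ε| < 1 := by
    rw [abs_mul, Nat.abs_cast, ← lt_div_iff₀' hq]; exact hε
  have hjq : (j : ℝ) + 2 ≤ q := by exact_mod_cast hj
  have hexp : q * ((j + δ) / q + ε) = j + δ + q * ε := by field_simp
  have hlt_one : (j + δ) / q + ε < 1 := by
    nlinarith [(abs_lt.mp hqε).2]
  have : q * ((j + δ) / q + ε) < q * L :=
    mul_lt_mul_of_pos_left ((Int.self_le_fract_of_lt_one hlt_one).trans_lt h) hq
  linarith [(abs_lt.mp hqε).1]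

theorem fract_grid_lt (hj : 1 ≤ j) (hδ0 : 0 ≤ δ) (hε : |ε| < 1 / q) (h : j + δ + 1 ≤ q * L) :
    Int.fract ((j + δ) / q + ε) < L := by
  have hq : (0 : ℝ) < q := one_div_pos.mp ((abs_nonneg ε).trans_lt hε)
  have hqε : |q * ε| < 1 := by
    rw [abs_mul, Nat.abs_cast, ← lt_div_iff₀' hq]; exact hε
  have hj1 : (1 : ℝ) ≤ j := by exact_mod_cast hj
  have hexp : q * ((j + δ) / q + ε) = j + δ + q * ε := by field_simp
  have hnonneg : 0 ≤ (j + δ) / q + ε := by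
    refine nonneg_of_mul_nonneg_right ?_ hq
    nlinarith [(abs_lt.mp hqε).1]
  refine (Int.fract_le_self_of_nonneg hnonneg).trans_lt (lt_of_mul_lt_mul_left ?_ hq.le)
  linarith [(abs_lt.mp hqε).2]

end Grid

section GridCount

variable {q : ℕ} {J : ℕ → ℕ} {δ L : ℝ} {ε : ℕ → ℝ}

theorem card_fract_grid_lt_lt (hJmaps : Set.MapsTo J (range q) (range q))
    (hJinj : Set.InjOn J (range q)) (hδ0 : 0 ≤ δ) (hδ1 : δ < 1)
    (hε : ∀ s < q, |ε s| < 1 / q) (hL : 0 ≤ L) :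
    (#{s ∈ range q | Int.fract ((J s + δ) / q + ε s) < L} : ℝ) < q * L + 3 := by
  have hsub : {s ∈ range q | Int.fract ((J s + δ) / q + ε s) < L} ⊆
      {s ∈ range q | (J s : ℝ) < q * L + 1 ∨ J s = q - 1} := by
    intro s hs
    obtain ⟨hs, hlt⟩ := mem_filter.mp hs
    refine mem_filter.mpr ⟨hs, or_iff_not_imp_right.mpr fun hne => ?_⟩
    have hJs : J s < q := mem_range.mp (hJmaps hs)
    exact lt_mul_add_one_of_fract_grid_lt (by omega) hδ0 hδ1 (hε s (mem_range.mp hs)) hlt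
  calc (#{s ∈ range q | Int.fract ((J s + δ) / q + ε s) < L} : ℝ)
      ≤ #{s ∈ range q | (J s : ℝ) < q * L + 1 ∨ J s = q - 1} := by
        exact_mod_cast card_le_card hsub
    _ = #{j ∈ range q | ((j : ℕ) : ℝ) < q * L + 1 ∨ j = q - 1} := by
        rw [card_filter_comp_of_injOn hJmaps hJinj fun j => (j : ℝ) < q * L + 1 ∨ j = q - 1]
    _ < q * L + 1 + 2 := card_range_filter_lt_or_eq_lt (by positivity) (q - 1)
    _ = q * L + 3 := by ring

theorem lt_card_fract_grid_lt (hJmaps : Set.MapsTo J (range q) (range q))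
    (hJinj : Set.InjOn J (range q)) (hδ0 : 0 ≤ δ) (hδ1 : δ < 1)
    (hε : ∀ s < q, |ε s| < 1 / q) (hL : L ≤ 1) :
    q * L - 3 < #{s ∈ range q | Int.fract ((J s + δ) / q + ε s) < L} := by
  have hsub : {s ∈ range q | 1 ≤ J s ∧ (J s : ℝ) ≤ q * L - 1 - δ} ⊆
      {s ∈ range q | Int.fract ((J s + δ) / q + ε s) < L} := by
    intro s hs
    obtain ⟨hs, hJ1, hJL⟩ := mem_filter.mp hs
    exact mem_filter.mpr ⟨hs, fract_grid_lt hJ1 hδ0 (hε s (mem_range.mp hs)) (by linarith)⟩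
  have hqL : (q : ℝ) * L - 1 - δ < q := by nlinarith [(Nat.cast_nonneg q : (0 : ℝ) ≤ q)]
  calc (q : ℝ) * L - 3 < q * L - 1 - δ - 1 := by linarith
    _ < #{j ∈ range q | 1 ≤ j ∧ ((j : ℕ) : ℝ) ≤ q * L - 1 - δ} :=
        card_range_filter_one_le_le_gt hqL
    _ = #{s ∈ range q | 1 ≤ J s ∧ (J s : ℝ) ≤ q * L - 1 - δ} := by
        rw [card_filter_comp_of_injOn hJmaps hJinj fun j => 1 ≤ j ∧ (j : ℝ) ≤ q * L - 1 - δ]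
    _ ≤ #{s ∈ range q | Int.fract ((J s + δ) / q + ε s) < L} := by
        exact_mod_cast card_le_card hsub

end GridCount

theorem orbit_discrepancy_interval_general (α : ℝ) (x a b : ℝ)
    (q : ℕ) (hq : 1 ≤ q) (p : ℤ) (hcop : Nat.Coprime p.natAbs q)
    (happrox : |(q : ℝ) * α - (p : ℝ)| < 1 / (q : ℝ))
    (hab : a ≤ b) (hlen : b - a ≤ 1) :
    |(((Finset.range q).filter
          (fun s => Int.fract (x + (s : ℝ) * α - a) < b - a)).card : ℝ) -
        (q : ℝ) * (b - a)| ≤ 4 := by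
  -- The cast `(s : ℝ)` makes Lean elaborate `Finset.range q` here as a `Finset ℝ`, through the
  -- monad structure of `Finset`.
  rw [show (do let s ← range q; pure (s : ℝ) : Finset ℝ) = (range q).image Nat.cast from
    sup_singleton_apply _ _, filter_image, card_image_of_injective _ Nat.cast_injective]
  have hq0 : q ≠ 0 := by omega
  have hgrid : {s ∈ range q | Int.fract (x + ((s : ℕ) : ℝ) * α - a) < b - a} =
      {s ∈ range q | Int.fract ((affineResidue q ⌊q * (x - a)⌋ p s + Int.fract (q * (x - a))) / q
        + s * (α - p / q)) < b - a} :=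
    filter_congr fun s _ => by
      rw [add_sub_right_comm, fract_add_nat_mul_eq_fract_affineResidue hq0]
  have hε : ∀ s < q, |(s : ℝ) * (α - p / q)| < 1 / q :=
    fun s hs => abs_nat_mul_sub_div_lt hs happrox
  have hmaps := affineResidue_mapsTo (m := ⌊q * (x - a)⌋) (p := p) hq0
  have hinj := affineResidue_injOn (m := ⌊q * (x - a)⌋) hq0 hcop
  have hδ0 := Int.fract_nonneg ((q : ℝ) * (x - a))
  have hδ1 := Int.fract_lt_one ((q : ℝ) * (x - a))
  have hupper := card_fract_grid_lt_lt hmaps hinj hδ0 hδ1 hε (sub_nonneg.mpr hab)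
  have hlower := lt_card_fract_grid_lt hmaps hinj hδ0 hδ1 hε hlen
  rw [hgrid, abs_le]
  constructor <;> linarith

/-- Denjoy–Koksma discrepancy estimate: for any arc `I = [a, b)` of length `b - a ≤ 1`
on the torus and any `x`, the number of `s < q_n` with `x + sα mod 1 ∈ I` differs from
`q_n λ(I)` by at most `4`. -/
theorem orbit_discrepancy_interval (α : ℝ) (hα : Irrational α) (x a b : ℝ)
    (q : ℕ) (hq : 1 ≤ q) (p : ℤ) (hcop : Nat.Coprime p.natAbs q)
    (happrox : |(q : ℝ) * α - (p : ℝ)| < 1 / (q : ℝ))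
    (hab : a ≤ b) (hlen : b - a ≤ 1) :
    |(((Finset.range q).filter
          (fun s => Int.fract (x + (s : ℝ) * α - a) < b - a)).card : ℝ) -
        (q : ℝ) * (b - a)| ≤ 4 :=
  orbit_discrepancy_interval_general α x a b q hq p hcop happrox hab hlen
end

section
/- Define the set Ξ(b,c) = {α ∈ (0,1) irrational : a_n(α) = c^{b^n} for all n}, where a_n(α) are the continued fraction partial quotients. For every b > 1 and c > 1 an integer with all c^{b^n} integers, every α ∈ Ξ(b,c) satisfies: the sequence W_n(α) defined as W_n = (log q_{n+1} − log q_n)/log q_n if q_{n+1} < 2 q_n log q_n, and W_n = max{1, log log q_n − log log(q_{n+1}/(q_n log q_n))}/log q_n otherwise, satisfies ∑_{n=1}^∞ W_n(α) < ∞. -/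
/-- The sequence `W_n` from the paper, built from the convergent denominators `q_n`. -/
noncomputable def Wseq (q : ℕ → ℝ) (n : ℕ) : ℝ :=
  if q (n + 1) < 2 * q n * Real.log (q n) then
    (Real.log (q (n + 1)) - Real.log (q n)) / Real.log (q n)
  else
    max 1 (Real.log (Real.log (q n)) -
        Real.log (Real.log (q (n + 1) / (q n * Real.log (q n))))) / Real.log (q n)

/-- If the partial quotients satisfy `a_n = c^{b^n}` with `b > 1` and an integer
`c > 1`, then `∑ W_n < ∞` for the associated convergent denominators. -/
theorem summable_Wseq_of_luczak (b : ℝ) (hb : 1 < b) (c : ℕ) (hc : 2 ≤ c)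
    (a : ℕ → ℕ) (ha : ∀ n, (a n : ℝ) = (c : ℝ) ^ (b ^ n))
    (q : ℕ → ℝ) (hq0 : q 0 = 1) (hq1 : q 1 = a 1)
    (hqrec : ∀ n, 1 ≤ n → q (n + 1) = (a (n + 1) : ℝ) * q n + q (n - 1)) :
    Summable (Wseq q) := by
  have hb0 : (0:ℝ) < b := by linarith
  have hc2 : (2:ℝ) ≤ (c:ℝ) := by exact_mod_cast hc
  have hc0 : (0:ℝ) < (c:ℝ) := by linarith
  set L := Real.log c with hLdef
  have hlog2 : (0:ℝ) < Real.log 2 := Real.log_pos (by norm_num)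
  have hL2 : Real.log 2 ≤ L := Real.log_le_log (by norm_num) hc2
  have hL0 : 0 < L := lt_of_lt_of_le hlog2 hL2
  have hbn1 : ∀ n : ℕ, (1:ℝ) ≤ b ^ n := fun n => one_le_pow₀ hb.le
  have hloga : ∀ n, Real.log (a n) = b ^ n * L := by
    intro n; rw [ha n, Real.log_rpow hc0]
  have ha1' : ∀ n, (1:ℝ) ≤ (a n : ℝ) := by
    intro n; rw [ha n]
    calc (1:ℝ) = (c:ℝ) ^ (0:ℝ) := (Real.rpow_zero _).symm
    _ ≤ (c:ℝ) ^ (b ^ n) := Real.rpow_le_rpow_of_exponent_le (by linarith) (by positivity)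
  have hq1two : (2:ℝ) ≤ q 1 := by
    rw [hq1, ha 1]
    calc (2:ℝ) ≤ (c:ℝ) := hc2
    _ = (c:ℝ) ^ (1:ℝ) := (Real.rpow_one _).symm
    _ ≤ (c:ℝ) ^ (b ^ 1) := Real.rpow_le_rpow_of_exponent_le (by linarith)
        (by simpa using hb.le)
  -- basic structure of q
  have hQ : ∀ n, 1 ≤ n → 2 ≤ q n ∧ q n ≤ q (n+1) ∧ q (n-1) ≤ q n := by
    intro n hn
    induction n, hn using Nat.le_induction with
    | base =>
      refine ⟨hq1two, ?_, by rw [hq0]; linarith⟩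
      have h2 := hqrec 1 le_rfl
      norm_num at h2
      rw [h2, hq0]
      nlinarith [ha1' 2]
    | succ n hn ih =>
      obtain ⟨h1, h2, h3⟩ := ih
      have hr := hqrec (n+1) (by omega)
      simp only [Nat.add_sub_cancel] at hr
      refine ⟨by linarith, ?_, by simpa using h2⟩
      rw [hr]
      nlinarith [ha1' (n+2)]
  have hqpos : ∀ n, 0 < q n := by
    intro n
    cases n with
    | zero => rw [hq0]; norm_num
    | succ m => have := (hQ (m+1) (by omega)).1; linarith
  have hlq : ∀ n, 1 ≤ n → 0 < Real.log (q n) := fun n hn =>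
    Real.log_pos (by linarith [(hQ n hn).1])
  -- lower bound on log q n
  have hlb : ∀ n, 1 ≤ n → b ^ n * L ≤ Real.log (q n) := by
    intro n hn
    induction n, hn using Nat.le_induction with
    | base => rw [hq1, hloga 1]
    | succ n hn ih =>
      have hr := hqrec n hn
      have hga := ha1' (n+1)
      have hqn := hqpos n
      have hstep : Real.log ((a (n+1):ℝ) * q n) ≤ Real.log (q (n+1)) :=
        Real.log_le_log (mul_pos (by linarith) hqn)
          (by rw [hr]; nlinarith [hqpos (n-1)])
      rw [Real.log_mul (ne_of_gt (by linarith : (0:ℝ) < (a (n+1):ℝ)))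
        (hqpos n).ne', hloga] at hstep
      have hpos : (0:ℝ) ≤ b ^ n * L := by positivity
      linarith
  -- upper bound on log q n
  set D := (Real.log 2 + L * b) / (b - 1) with hDdef
  have hb1 : (0:ℝ) < b - 1 := by linarith
  have hD0 : 0 < D := div_pos (by nlinarith) hb1
  have hDb : D * (b - 1) = Real.log 2 + L * b := by
    rw [hDdef]; exact div_mul_cancel₀ _ (ne_of_gt hb1)
  have hub : ∀ n, 1 ≤ n → Real.log (q n) ≤ D * b ^ n := by
    intro n hn
    induction n, hn using Nat.le_induction with
    | base =>
      rw [hq1, hloga 1, pow_one]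
      linarith [hDb, hlog2, hD0]
    | succ n hn ih =>
      have hr := hqrec n hn
      have h2q : q (n+1) ≤ 2 * (a (n+1):ℝ) * q n := by
        have h3 := (hQ n hn).2.2
        rw [hr]
        nlinarith [ha1' (n+1), hqpos n, hqpos (n-1), (hQ n hn).1]
      have hstep : Real.log (q (n+1)) ≤ Real.log (2 * (a (n+1):ℝ) * q n) :=
        Real.log_le_log (hqpos _) h2q
      rw [Real.log_mul (ne_of_gt (by linarith [ha1' (n+1)] : (0:ℝ) < 2 * (a (n+1):ℝ)))
        (hqpos n).ne', Real.log_mul (by norm_num)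
        (ne_of_gt (by linarith [ha1' (n+1)] : (0:ℝ) < (a (n+1):ℝ))), hloga] at hstep
      have e1 : D * b ^ (n+1) = Real.log 2 * b ^ n + L * b ^ (n+1) + D * b ^ n := by
        linear_combination (b ^ n) * hDb
      have e2 : Real.log 2 ≤ Real.log 2 * b ^ n := by nlinarith [hbn1 n]
      linarith
  have hll : ∀ n, 1 ≤ n → Real.log (Real.log (q n)) ≤ Real.log D + n * Real.log b := by
    intro n hn
    have h1 : Real.log (Real.log (q n)) ≤ Real.log (D * b ^ n) :=
      Real.log_le_log (hlq n hn) (hub n hn)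
    rw [Real.log_mul (ne_of_gt hD0) (by positivity), Real.log_pow] at h1
    linarith
  -- the comparison sequence
  set K := 1 + |Real.log D| + |Real.log (Real.log 2)| + Real.log 2 with hK
  have hK1 : (1:ℝ) ≤ K := by
    have := abs_nonneg (Real.log D)
    have := abs_nonneg (Real.log (Real.log 2))
    linarith
  have hlogb : 0 < Real.log b := Real.log_pos hb
  have hnum : ∀ n : ℕ, (0:ℝ) ≤ K + n * Real.log b := by
    intro n
    have : (0:ℝ) ≤ (n:ℝ) * Real.log b := by positivity
    linarith
  have hden : ∀ n : ℕ, (0:ℝ) < b ^ n * L := fun n => mul_pos (pow_pos hb0 n) hL0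
  have hbound : ∀ n, 0 ≤ Wseq q n ∧ Wseq q n ≤ (K + n * Real.log b) / (b ^ n * L) := by
    intro n
    rcases Nat.eq_zero_or_pos n with rfl | hn
    · have h0 : Wseq q 0 = 0 := by
        simp only [Wseq, hq0, Real.log_one]
        rw [if_neg (by push_neg; nlinarith [hq1two])]
        simp
      rw [h0]
      exact ⟨le_refl _, div_nonneg (hnum 0) (hden 0).le⟩
    · have hn1 : 1 ≤ n := hn
      have hl := hlq n hn1
      have hlbn := hlb n hn1
      have hlln := hll n hn1
      have hmono : q n ≤ q (n+1) := (hQ n hn1).2.1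
      have habs1 := le_abs_self (Real.log D)
      have habs2 := neg_abs_le (Real.log (Real.log 2))
      have habs3 := abs_nonneg (Real.log (Real.log 2))
      have habs4 := abs_nonneg (Real.log D)
      simp only [Wseq]
      split_ifs with h
      · -- "small gap" branch
        have h1 : Real.log (q (n+1)) ≤
            Real.log 2 + Real.log (q n) + Real.log (Real.log (q n)) := by
          have h2 := Real.log_le_log (hqpos (n+1)) h.le
          rwa [Real.log_mul (ne_of_gt (by linarith [hqpos n] : (0:ℝ) < 2 * q n))
            (ne_of_gt hl),
            Real.log_mul (by norm_num) (ne_of_gt (hqpos n))] at h2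
        have h2 : Real.log (q (n+1)) - Real.log (q n) ≤ K + n * Real.log b := by
          linarith
        have h3 : 0 ≤ Real.log (q (n+1)) - Real.log (q n) := by
          have := Real.log_le_log (hqpos n) hmono
          linarith
        exact ⟨div_nonneg h3 hl.le,
          div_le_div₀ (hnum n) h2 (hden n) hlbn⟩
      · push_neg at h
        have hinner : (2:ℝ) ≤ q (n+1) / (q n * Real.log (q n)) := by
          rw [le_div_iff₀ (mul_pos (hqpos n) hl)]
          linarith
        have hlin : Real.log 2 ≤ Real.log (q (n+1) / (q n * Real.log (q n))) :=
          Real.log_le_log (by norm_num) hinner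
        have hllin : Real.log (Real.log 2) ≤
            Real.log (Real.log (q (n+1) / (q n * Real.log (q n)))) :=
          Real.log_le_log hlog2 hlin
        have hmax : max 1 (Real.log (Real.log (q n)) -
            Real.log (Real.log (q (n+1) / (q n * Real.log (q n))))) ≤
            K + n * Real.log b := by
          apply max_le
          · have : (0:ℝ) ≤ (n:ℝ) * Real.log b := by positivity
            linarith
          · linarith
        refine ⟨div_nonneg (le_trans zero_le_one (le_max_left _ _)) hl.le,
          div_le_div₀ (hnum n) hmax (hden n) hlbn⟩
  -- summability of the comparison sequence
  have hr0 : (0:ℝ) ≤ 1/b := by positivity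
  have hr1 : (1:ℝ)/b < 1 := by rw [div_lt_one hb0]; linarith
  have hgeo : Summable (fun n : ℕ => (1/b) ^ n) := summable_geometric_of_lt_one hr0 hr1
  have hng : Summable (fun n : ℕ => (n:ℝ) * (1/b) ^ n) := by
    have hnorm : ‖(1:ℝ)/b‖ < 1 := by
      rw [Real.norm_eq_abs, abs_of_nonneg hr0]; exact hr1
    simpa using summable_pow_mul_geometric_of_norm_lt_one 1 hnorm
  have hg : Summable (fun n : ℕ => (K + n * Real.log b) / (b ^ n * L)) := by
    have h1 : Summable (fun n : ℕ =>
        (K / L) * (1/b) ^ n + (Real.log b / L) * ((n:ℝ) * (1/b) ^ n)) :=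
      (hgeo.mul_left _).add (hng.mul_left _)
    apply h1.congr
    intro n
    have hbn : (b:ℝ) ^ n ≠ 0 := by positivity
    rw [one_div, inv_pow]
    field_simp
  exact Summable.of_nonneg_of_le (fun n => (hbound n).1) (fun n => (hbound n).2) hg
end

section
/- Let α be irrational with ∑ W_n(α) = ∞, where W_n is defined as in the paper, and let 𝒟 = {n : a_{n+1} = 1 and a_n ≠ 1}. Then ∑_{n ∈ 𝒟ᶜ} W_n = ∞. -/
/-!
For `n ∈ 𝒟` we have `a_{n+1} = 1`, so `q_{n+1} ≤ 2 q_n` and `q_{n+2} ≥ (3/2) q_{n+1}`; this gives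
`W_n ≤ log 2 / log q_n ≤ 4 log (3/2) / log q_{n+1} ≤ 4 W_{n+1}`. Since `n ∈ 𝒟` forces `n + 1 ∉ 𝒟`,
every term indexed by `𝒟` is dominated by four times the next term, which is indexed by `𝒟ᶜ`.
-/

open Filter

open Finset Real

section DominatedTerms

variable {f : ℕ → ℝ} {p : ℕ → Prop} [DecidablePred p] {c : ℝ} {n₀ : ℕ}

theorem sum_range_le_add_mul_sum_range_filter_not (hf : ∀ n, 0 ≤ f n) (hc : 0 ≤ c)
    (hp : ∀ n, n₀ ≤ n → p n → ¬p (n + 1) ∧ f n ≤ c * f (n + 1)) (N : ℕ) :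
    ∑ n ∈ range N, f n ≤
      ∑ n ∈ range n₀, f n + (1 + c) * ∑ n ∈ (range (N + 1)).filter (fun n => ¬p n), f n := by
  set g : ℕ → ℝ := fun n => if ¬p n then f n else 0
  have hg : ∀ n, 0 ≤ g n := fun n => by
    simp only [g]
    split_ifs
    exacts [le_rfl, hf n]
  have hpoint : ∀ n, f n ≤ (if n < n₀ then f n else 0) + g n + c * g (n + 1) := by
    intro n
    have hgc := mul_nonneg hc (hg (n + 1))
    by_cases hn : n < n₀
    · simp only [if_pos hn]
      linarith [hg n]
    by_cases hpn : p n
    · obtain ⟨hnext, hle⟩ := hp n (not_lt.1 hn) hpn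
      simpa [g, hn, hpn, hnext] using hle
    · simp only [g, if_neg hn, if_pos hpn]
      linarith
  have hinit : ∑ n ∈ range N, (if n < n₀ then f n else 0) ≤ ∑ n ∈ range n₀, f n := by
    rw [← sum_filter]
    exact sum_le_sum_of_subset_of_nonneg (fun n hn => by simp_all) (fun n _ _ => hf n)
  have hshift : ∑ n ∈ range N, g (n + 1) ≤ ∑ n ∈ range (N + 1), g n := by
    rw [sum_range_succ' g N]
    linarith [hg 0]
  have hmono : ∑ n ∈ range N, g n ≤ ∑ n ∈ range (N + 1), g n := by
    rw [sum_range_succ]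
    linarith [hg N]
  rw [sum_filter]
  calc ∑ n ∈ range N, f n
      ≤ ∑ n ∈ range N, ((if n < n₀ then f n else 0) + g n + c * g (n + 1)) :=
        sum_le_sum fun n _ => hpoint n
    _ = ∑ n ∈ range N, (if n < n₀ then f n else 0) + ∑ n ∈ range N, g n +
          c * ∑ n ∈ range N, g (n + 1) := by
        rw [sum_add_distrib, sum_add_distrib, mul_sum]
    _ ≤ ∑ n ∈ range n₀, f n + (1 + c) * ∑ n ∈ range (N + 1), g n := by nlinarith

theorem tendsto_sum_range_filter_not_of_le_mul_succ (hf : ∀ n, 0 ≤ f n) (hc : 0 ≤ c)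
    (hp : ∀ n, n₀ ≤ n → p n → ¬p (n + 1) ∧ f n ≤ c * f (n + 1))
    (hdiv : Tendsto (fun N => ∑ n ∈ range N, f n) atTop atTop) :
    Tendsto (fun N => ∑ n ∈ (range N).filter (fun n => ¬p n), f n) atTop atTop := by
  refine (tendsto_add_atTop_iff_nat 1).mp (tendsto_atTop_mono (fun N => ?_)
    ((tendsto_atTop_add_const_right _ (-∑ n ∈ range n₀, f n) hdiv).atTop_div_const
      (by linarith : (0 : ℝ) < 1 + c)))
  rw [div_le_iff₀ (by linarith)]
  linarith [sum_range_le_add_mul_sum_range_filter_not hf hc hp N]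

end DominatedTerms

section Wseq

variable {q : ℕ → ℝ} {n : ℕ}

theorem Wseq_nonneg (hq : 1 ≤ q n) (hmono : q n ≤ q (n + 1)) : 0 ≤ Wseq q n := by
  have hlog : 0 ≤ log (q n) := log_nonneg hq
  rw [Wseq]
  split_ifs
  · exact div_nonneg (sub_nonneg.2 (log_le_log (by linarith) hmono)) hlog
  · exact div_nonneg (le_trans zero_le_one (le_max_left _ _)) hlog

theorem Wseq_le_log_two_div (hq : exp 1 < q n) (hpos : 0 < q (n + 1))
    (hle : q (n + 1) ≤ 2 * q n) : Wseq q n ≤ log 2 / log (q n) := by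
  have hqpos : 0 < q n := (exp_pos 1).trans hq
  have hlog : 1 < log (q n) := (lt_log_iff_exp_lt hqpos).2 hq
  have hsmall : q (n + 1) < 2 * q n * log (q n) := by nlinarith
  have hlog_le : log (q (n + 1)) ≤ log 2 + log (q n) := by
    rw [← log_mul two_ne_zero hqpos.ne']
    exact log_le_log hpos hle
  rw [Wseq, if_pos hsmall]
  exact div_le_div_of_nonneg_right (by linarith) (by linarith)

theorem log_div_le_Wseq {r : ℝ} (hr : 0 < r) (hre : r ≤ exp 1) (hq : 1 < q n)
    (hge : r * q n ≤ q (n + 1)) : log r / log (q n) ≤ Wseq q n := by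
  have hqpos : 0 < q n := by linarith
  have hlog : 0 < log (q n) := log_pos hq
  rw [Wseq]
  split_ifs
  · have := log_le_log (by positivity) hge
    rw [log_mul hr.ne' hqpos.ne'] at this
    exact div_le_div_of_nonneg_right (by linarith) hlog.le
  · have hlog_r : log r ≤ 1 := by simpa using log_le_log hr hre
    exact div_le_div_of_nonneg_right (hlog_r.trans (le_max_left _ _)) hlog.le

end Wseq

structure IsConvergentDenominators (a : ℕ → ℕ) (q : ℕ → ℝ) : Prop where
  one_le_partialQuotient : ∀ n, 1 ≤ a n
  zero : q 0 = 1
  one : q 1 = a 1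
  succ : ∀ n, 1 ≤ n → q (n + 1) = a (n + 1) * q n + q (n - 1)

namespace IsConvergentDenominators

variable {a : ℕ → ℕ} {q : ℕ → ℝ}

theorem one_le_and_le_succ (hq : IsConvergentDenominators a q) (n : ℕ) :
    1 ≤ q n ∧ q n ≤ q (n + 1) := by
  induction n with
  | zero =>
    rw [hq.zero, hq.one]
    exact ⟨le_rfl, mod_cast hq.one_le_partialQuotient 1⟩
  | succ k ih =>
    have ha : (1 : ℝ) ≤ a (k + 2) := mod_cast hq.one_le_partialQuotient (k + 2)
    refine ⟨ih.1.trans ih.2, ?_⟩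
    rw [hq.succ (k + 1) (Nat.le_add_left 1 k), Nat.add_sub_cancel]
    nlinarith [ih.1, ih.2]

theorem one_le (hq : IsConvergentDenominators a q) (n : ℕ) : 1 ≤ q n :=
  (hq.one_le_and_le_succ n).1

theorem monotone (hq : IsConvergentDenominators a q) : Monotone q :=
  monotone_nat_of_le_succ fun n => (hq.one_le_and_le_succ n).2

theorem add_le_succ (hq : IsConvergentDenominators a q) {n : ℕ} (hn : 1 ≤ n) :
    q n + q (n - 1) ≤ q (n + 1) := by
  have ha : (1 : ℝ) ≤ a (n + 1) := mod_cast hq.one_le_partialQuotient (n + 1)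
  rw [hq.succ n hn]
  nlinarith [hq.one_le n]

theorem natCast_le (hq : IsConvergentDenominators a q) (n : ℕ) : (n : ℝ) ≤ q n := by
  have key : ∀ m : ℕ, (m : ℝ) + 1 ≤ q (m + 1) := by
    intro m
    induction m with
    | zero => simpa using hq.one_le 1
    | succ k ih =>
      have := hq.add_le_succ (n := k + 1) (by omega)
      rw [Nat.add_sub_cancel] at this
      push_cast
      linarith [hq.one_le k]
  rcases n with _ | n
  · simp [hq.zero]
  · exact_mod_cast key n

theorem Wseq_le_four_mul_Wseq_succ (hq : IsConvergentDenominators a q) {n : ℕ} (hn : 3 ≤ n)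
    (h1 : a (n + 1) = 1) : Wseq q n ≤ 4 * Wseq q (n + 1) := by
  have hq3 : (3 : ℝ) ≤ q n := le_trans (by exact_mod_cast hn) (hq.natCast_le n)
  have hrec : q (n + 1) = q n + q (n - 1) := by
    simpa [h1] using hq.succ n (by omega)
  have hprev : q (n - 1) ≤ q n := hq.monotone (n.sub_le 1)
  have hprev_one : 1 ≤ q (n - 1) := hq.one_le (n - 1)
  have hnext_le : q (n + 1) ≤ 2 * q n := by linarith
  have hnext_gt : 1 < q (n + 1) := by linarith
  have hnext2 : 3 / 2 * q (n + 1) ≤ q (n + 2) := by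
    have := hq.add_le_succ (n := n + 1) (by omega)
    rw [Nat.add_sub_cancel] at this
    linarith
  have hexp_gt : (3 : ℝ) / 2 < exp 1 := by linarith [add_one_le_exp (1 : ℝ)]
  have hlower : log (3 / 2) / log (q (n + 1)) ≤ Wseq q (n + 1) :=
    log_div_le_Wseq (by norm_num) hexp_gt.le hnext_gt hnext2
  have hlog_next : log (q (n + 1)) ≤ 2 * log (q n) :=
    calc log (q (n + 1)) ≤ log (q n ^ 2) := log_le_log (by linarith) (by nlinarith)
      _ = 2 * log (q n) := by rw [log_pow]; norm_num
  have hlog_two : log 2 ≤ 2 * log (3 / 2) :=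
    calc log 2 ≤ log ((3 / 2) ^ 2) := log_le_log (by norm_num) (by norm_num)
      _ = 2 * log (3 / 2) := by rw [log_pow]; norm_num
  calc Wseq q n ≤ log 2 / log (q n) :=
        Wseq_le_log_two_div (by linarith [exp_one_lt_d9]) (by linarith) hnext_le
    _ ≤ 2 * log (3 / 2) / log (q n) :=
        div_le_div_of_nonneg_right hlog_two (log_nonneg (by linarith))
    _ = 4 * log (3 / 2) / (2 * log (q n)) := by ring
    _ ≤ 4 * log (3 / 2) / log (q (n + 1)) :=
        div_le_div_of_nonneg_left (by positivity) (log_pos hnext_gt) hlog_next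
    _ = 4 * (log (3 / 2) / log (q (n + 1))) := by ring
    _ ≤ 4 * Wseq q (n + 1) := by linarith

end IsConvergentDenominators

/-- If `∑ W_n = ∞` and `𝒟 = {n : a_{n+1} = 1 ∧ a_n ≠ 1}`, then `∑_{n ∈ 𝒟ᶜ} W_n = ∞`. -/
theorem Wseq_divergence_off_D (a : ℕ → ℕ) (ha : ∀ n, 1 ≤ a n)
    (q : ℕ → ℝ) (hq0 : q 0 = 1) (hq1 : q 1 = a 1)
    (hqrec : ∀ n, 1 ≤ n → q (n + 1) = (a (n + 1) : ℝ) * q n + q (n - 1))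
    (hdiv : Tendsto (fun N => ∑ n ∈ Finset.range N, Wseq q n) atTop atTop) :
    Tendsto
      (fun N => ∑ n ∈ (Finset.range N).filter (fun n => ¬(a (n + 1) = 1 ∧ a n ≠ 1)),
        Wseq q n) atTop atTop := by
  have hq : IsConvergentDenominators a q := ⟨ha, hq0, hq1, hqrec⟩
  refine tendsto_sum_range_filter_not_of_le_mul_succ (c := 4) (n₀ := 3)
    (fun n => Wseq_nonneg (hq.one_le n) (hq.monotone n.le_succ)) (by norm_num) ?_ hdiv
  rintro n hn ⟨hD, -⟩
  exact ⟨fun hD' => hD'.2 hD, hq.Wseq_le_four_mul_Wseq_succ hn hD⟩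
end
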